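/- arXiv:2108.07642 — 2 statements merged into one kernel-verified Lean document; each statement's English description precedes it below -/
import Mathlib

section
/- The sortedness predicate defined via the tail-shift automatic relation is correct: for a word X ∈ ℤ*, the relation R_{M₁}(X, tail X) holds if and only if X is sorted in (weakly) ascending order, where R_{M₁}(u,v) means that at every position i ≤ |u|, it is not the case that the i-th letter of u exists, the i-th letter of v exists, and uᵢ > vᵢ (positions where v is exhausted impose no constraint beyond the negated comparison being vacuously satisfied by the padding semantics: ¬(a > ⊥) is true). -/
/-- Convolution of two integer words, padding the shorter one at the end with `none` (⊥). -/
def conv2 (u v : List ℤ) : List (Option ℤ × Option ℤ) :=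
  (List.range (max u.length v.length)).map (fun j => (u[j]?, v[j]?))

theorem forall_mem_conv2_iff {P : Option ℤ × Option ℤ → Prop} (hP : P (none, none))
    (u v : List ℤ) : (∀ a ∈ conv2 u v, P a) ↔ ∀ j : ℕ, P (u[j]?, v[j]?) := by
  simp only [conv2, List.forall_mem_map, List.mem_range]
  refine ⟨fun h j => ?_, fun h j _ => h j⟩
  by_cases hj : j < max u.length v.length
  · exact h j hj
  · rw [List.getElem?_eq_none (by omega), List.getElem?_eq_none (by omega)]
    exact hP

theorem List.isChain_iff_forall_getElem?_tail {α : Type*} {R : α → α → Prop} {l : List α} :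
    l.IsChain R ↔ ∀ (j : ℕ) (m n : α), l[j]? = some m → l.tail[j]? = some n → R m n := by
  simp only [List.getElem?_tail, List.getElem?_eq_some_iff]
  rw [List.isChain_iff_getElem]
  constructor
  · rintro h j m n ⟨hj, rfl⟩ ⟨hj', rfl⟩
    exact h j hj'
  · exact fun h j hj => h j _ _ ⟨by omega, rfl⟩ ⟨hj, rfl⟩

/-- Correctness of the sortedness predicate via the tail-shift automatic relation:
every letter of `conv2 X (tail X)` satisfies `¬(l₀ > l₁)` (where `>` is false if either
argument is ⊥) iff `X` is sorted in weakly ascending order. -/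
theorem sorted_iff_tailShift (X : List ℤ) :
    (∀ a ∈ conv2 X X.tail, ¬ ∃ m n : ℤ, a.1 = some m ∧ a.2 = some n ∧ m > n) ↔
      List.Chain' (· ≤ ·) X := by
  rw [forall_mem_conv2_iff (by simp), List.Chain', List.isChain_iff_forall_getElem?_tail]
  simp only [not_exists, not_and, not_lt]
end

section
/- Correctness of the nth-element encoding via a counter list: for i ≥ 0, x ∈ ℤ, and X ∈ ℤ*, there exists Y ∈ ℤ* such that the synchronized run condition of M₂(x) on (i·Y, Y, X) holds — namely there exists a position m with 1 ≤ m ≤ |conv(i·Y, Y, X)| such that the first component at position m is 0 and the third component is x, and for all positions p < m the first component equals the second component plus 1 — if and only if 1 ≤ i+1 ≤ |X| and the (i+1)-th element of X equals x (using 0-based index i). -/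
/-! Since `(i :: Y)[p + 1] = Y[p]`, the condition "first track = second track + 1" before
position `m` forces the first track to read `i, i - 1, …, i - m`; so it reads `0` exactly at
`m = i`, where the third track must then read `X[i] = x`. Conversely the counter list
`Y = [i - 1, …, 0]` realizes this run whenever `X[i] = x`. -/

/-- Convolution of three integer words, padding shorter ones at the end with `none` (⊥). -/
def conv3 (u v w : List ℤ) : List (Option ℤ × Option ℤ × Option ℤ) :=
  (List.range (max u.length (max v.length w.length))).map
    (fun j => (u[j]?, v[j]?, w[j]?))

@[simp]
lemma length_conv3 (u v w : List ℤ) :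
    (conv3 u v w).length = max u.length (max v.length w.length) := by
  simp [conv3]

@[simp]
lemma getElem_conv3 (u v w : List ℤ) (j : ℕ) (hj : j < (conv3 u v w).length) :
    (conv3 u v w)[j] = (u[j]?, v[j]?, w[j]?) := by
  simp [conv3]

lemma run_conv3_cons_iff (a x : ℤ) (Y X : List ℤ) :
    (∃ m, ∃ hm : m < (conv3 (a :: Y) Y X).length,
        ((conv3 (a :: Y) Y X)[m]).1 = some 0 ∧
        ((conv3 (a :: Y) Y X)[m]).2.2 = some x ∧
        ∀ p, ∀ hp : p < m,
          ∃ c b : ℤ,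
            ((conv3 (a :: Y) Y X)[p]'(hp.trans hm)).1 = some c ∧
            ((conv3 (a :: Y) Y X)[p]'(hp.trans hm)).2.1 = some b ∧
            c = b + 1) ↔
      ∃ m : ℕ, (a :: Y)[m]? = some 0 ∧ X[m]? = some x ∧
        ∀ p < m, ∃ b : ℤ, Y[p]? = some b ∧ (a :: Y)[p]? = some (b + 1) := by
  simp only [getElem_conv3]
  constructor
  · rintro ⟨m, -, h0, hx, hrun⟩
    refine ⟨m, h0, hx, fun p hp => ?_⟩
    obtain ⟨c, b, hc, hb, rfl⟩ := hrun p hp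
    exact ⟨b, hb, hc⟩
  · rintro ⟨m, h0, hx, hrun⟩
    have hm : m < (a :: Y).length := (List.getElem?_eq_some_iff.mp h0).1
    refine ⟨m, by simp only [length_conv3, List.length_cons] at hm ⊢; omega, h0, hx, fun p hp => ?_⟩
    obtain ⟨b, hb, hc⟩ := hrun p hp
    exact ⟨b + 1, b, hc, hb, rfl⟩

lemma getElem?_cons_eq_sub_of_run {a : ℤ} {Y : List ℤ} {m : ℕ}
    (hrun : ∀ p < m, ∃ b : ℤ, Y[p]? = some b ∧ (a :: Y)[p]? = some (b + 1)) :
    ∀ p ≤ m, (a :: Y)[p]? = some (a - p) := by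
  intro p hp
  induction p with
  | zero => simp
  | succ q ih =>
    obtain ⟨b, hb, hc⟩ := hrun q (by omega)
    have hb' : b = a - q - 1 := by
      rw [ih (by omega), Option.some_inj] at hc
      omega
    rw [List.getElem?_cons_succ, hb, hb']
    push_cast
    ring_nf

def countdown (i : ℕ) : List ℤ :=
  (List.range i).map fun p : ℕ => (i : ℤ) - p - 1

lemma getElem?_countdown {i p : ℕ} (hp : p < i) :
    (countdown i)[p]? = some ((i : ℤ) - p - 1) := by
  simp [countdown, hp]

lemma getElem?_cons_countdown {i p : ℕ} (hp : p ≤ i) :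
    ((i : ℤ) :: countdown i)[p]? = some ((i : ℤ) - p) := by
  cases p with
  | zero => simp
  | succ q =>
    rw [List.getElem?_cons_succ, getElem?_countdown (by omega)]
    push_cast
    ring_nf

/-- Correctness of the nth-element encoding via a counter list: there is a counter list
`Y` making the synchronized run condition of `M₂(x)` on `(i·Y, Y, X)` hold iff the
`i`-th (0-based) element of `X` exists and equals `x`. -/
theorem nth_encoding_correct (i : ℕ) (x : ℤ) (X : List ℤ) :
    (∃ Y : List ℤ,
        ∃ m, ∃ hm : m < (conv3 ((i : ℤ) :: Y) Y X).length,
          ((conv3 ((i : ℤ) :: Y) Y X)[m]).1 = some 0 ∧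
          ((conv3 ((i : ℤ) :: Y) Y X)[m]).2.2 = some x ∧
          ∀ p, ∀ hp : p < m,
            ∃ a b : ℤ,
              ((conv3 ((i : ℤ) :: Y) Y X)[p]'(hp.trans hm)).1 = some a ∧
              ((conv3 ((i : ℤ) :: Y) Y X)[p]'(hp.trans hm)).2.1 = some b ∧
              a = b + 1) ↔
      i < X.length ∧ X[i]? = some x := by
  simp only [run_conv3_cons_iff]
  constructor
  · rintro ⟨Y, m, h0, hx, hrun⟩
    have him : (i : ℤ) - m = 0 := by
      rw [getElem?_cons_eq_sub_of_run hrun m le_rfl, Option.some_inj] at h0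
      exact h0
    obtain rfl : i = m := by omega
    exact ⟨(List.getElem?_eq_some_iff.mp hx).1, hx⟩
  · rintro ⟨-, hx⟩
    refine ⟨countdown i, i, ?_, hx, fun p hp => ⟨_, getElem?_countdown hp, ?_⟩⟩
    · simpa using getElem?_cons_countdown (le_refl i)
    · rw [getElem?_cons_countdown hp.le]
      ring_nf
end
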